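/- Let a ∈ ℝ^m and let v, u : T^N → ℝ^m be continuous functions that are, respectively, a viscosity subsolution and a viscosity supersolution of the system H_i(x,Du_i) + (B(x)u(x))_i = a_i in T^N (i = 1,…,m). Set M := max_{1≤i≤m} max_{x∈T^N} (v_i(x) − u_i(x)). If x₀ ∈ T^N is such that v_i(x₀) − u_i(x₀) = M for some index i ∈ {1,…,m}, then v(x₀) = u(x₀) + M𝟙, i.e. v_j(x₀) − u_j(x₀) = M for every j ∈ {1,…,m}. -/

import Mathlib

open Filter MeasureTheory

noncomputable section

/-- We model the flat torus `T^N = ℝ^N/ℤ^N` by working with `ℤ^N`-periodic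
functions on `Euc N = ℝ^N` (with the Euclidean structure). -/
abbrev Euc (N : ℕ) := EuclideanSpace ℝ (Fin N)

/-- The vector of `ℝ^N` with integer coordinates `k`. -/
def intVec {N : ℕ} (k : Fin N → ℤ) : Euc N := WithLp.toLp 2 (fun i => (k i : ℝ))

/-- A function on `ℝ^N` is `ℤ^N`-periodic, i.e. descends to the torus. -/
def ZPeriodic {N : ℕ} {α : Type*} (f : Euc N → α) : Prop :=
  ∀ (x : Euc N) (k : Fin N → ℤ), f (x + intVec k) = f x

/-- `b` is a coupling matrix: off-diagonal entries are nonpositive and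
row sums are nonnegative. -/
def IsCouplingMat {m : ℕ} (b : Fin m → Fin m → ℝ) : Prop :=
  (∀ i j, j ≠ i → b i j ≤ 0) ∧ (∀ i, 0 ≤ ∑ j, b i j)

/-- `b` is degenerate: all row sums vanish. -/
def IsDegenerateMat {m : ℕ} (b : Fin m → Fin m → ℝ) : Prop :=
  ∀ i, ∑ j, b i j = 0

/-- `b` is irreducible: for every nonempty proper subset `I` of the indices
there are `i ∈ I` and `j ∉ I` with `b i j ≠ 0`. -/
def IsIrreducibleMat {m : ℕ} (b : Fin m → Fin m → ℝ) : Prop :=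
  ∀ I : Finset (Fin m), I.Nonempty → I ≠ Finset.univ → ∃ i ∈ I, ∃ j, j ∉ I ∧ b i j ≠ 0

/-- `H` is a convex Hamiltonian on the torus: continuous, convex in the momentum,
`ℤ^N`-periodic in the space variable, and coercive (uniformly in `x`). -/
def IsConvexHamiltonian {N : ℕ} (H : Euc N → Euc N → ℝ) : Prop :=
  Continuous (fun q : Euc N × Euc N => H q.1 q.2) ∧
  (∀ x : Euc N, ConvexOn ℝ Set.univ (H x)) ∧
  (∀ (x : Euc N) (k : Fin N → ℤ) (p : Euc N), H (x + intVec k) p = H x p) ∧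
  (∃ α β : ℝ → ℝ, Tendsto α atTop atTop ∧ Tendsto β atTop atTop ∧
    ∀ x p, α ‖p‖ ≤ H x p ∧ H x p ≤ β ‖p‖)

/-- `B` is a continuous field of irreducible degenerate coupling matrices
on the torus. -/
def IsCouplingField {N m : ℕ} (B : Euc N → Fin m → Fin m → ℝ) : Prop :=
  (∀ i j, Continuous fun x => B x i j) ∧
  (∀ i j, ZPeriodic fun x => B x i j) ∧
  (∀ x, IsCouplingMat (B x) ∧ IsDegenerateMat (B x) ∧ IsIrreducibleMat (B x))

/-- `u` is a viscosity subsolution of the weakly coupled system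
`H_i(x,Du_i) + (B(x)u(x))_i = a_i` on the torus. -/
def IsSubSol {N m : ℕ} (H : Fin m → Euc N → Euc N → ℝ) (B : Euc N → Fin m → Fin m → ℝ)
    (a : Fin m → ℝ) (u : Fin m → Euc N → ℝ) : Prop :=
  ∀ (i : Fin m) (x : Euc N) (φ : Euc N → ℝ), ContDiff ℝ 1 φ →
    IsLocalMax (fun y => u i y - φ y) x →
    H i x (gradient φ x) + ∑ j, B x i j * u j x ≤ a i

/-- `u` is a viscosity supersolution of the weakly coupled system
`H_i(x,Du_i) + (B(x)u(x))_i = a_i` on the torus. -/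
def IsSuperSol {N m : ℕ} (H : Fin m → Euc N → Euc N → ℝ) (B : Euc N → Fin m → Fin m → ℝ)
    (a : Fin m → ℝ) (u : Fin m → Euc N → ℝ) : Prop :=
  ∀ (i : Fin m) (x : Euc N) (φ : Euc N → ℝ), ContDiff ℝ 1 φ →
    IsLocalMin (fun y => u i y - φ y) x →
    a i ≤ H i x (gradient φ x) + ∑ j, B x i j * u j x

/-- The `i`-th equation subsolution property, restricted to a subset `U` of `ℝ^N`. -/
def SubSolIdxOn {N m : ℕ} (H : Fin m → Euc N → Euc N → ℝ) (B : Euc N → Fin m → Fin m → ℝ)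
    (i : Fin m) (U : Set (Euc N)) (u : Fin m → Euc N → ℝ) : Prop :=
  ∀ x ∈ U, ∀ φ : Euc N → ℝ, ContDiff ℝ 1 φ →
    IsLocalMax (fun y => u i y - φ y) x →
    H i x (gradient φ x) + ∑ j, B x i j * u j x ≤ 0

/-- The `i`-th equation supersolution property, restricted to a subset `U` of `ℝ^N`. -/
def SuperSolIdxOn {N m : ℕ} (H : Fin m → Euc N → Euc N → ℝ) (B : Euc N → Fin m → Fin m → ℝ)
    (i : Fin m) (U : Set (Euc N)) (u : Fin m → Euc N → ℝ) : Prop :=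
  ∀ x ∈ U, ∀ φ : Euc N → ℝ, ContDiff ℝ 1 φ →
    IsLocalMin (fun y => u i y - φ y) x →
    0 ≤ H i x (gradient φ x) + ∑ j, B x i j * u j x

/-- A continuous `ℝ^m`-valued function on the torus (componentwise continuous
and `ℤ^N`-periodic). -/
def IsTorusFun {N m : ℕ} (u : Fin m → Euc N → ℝ) : Prop :=
  (∀ i, Continuous (u i)) ∧ (∀ i, ZPeriodic (u i))

/-- The system with constant right-hand side `a` admits a continuous viscosity
subsolution. -/
def HasSubSol {N m : ℕ} (H : Fin m → Euc N → Euc N → ℝ) (B : Euc N → Fin m → Fin m → ℝ)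
    (a : ℝ) : Prop :=
  ∃ u : Fin m → Euc N → ℝ, IsTorusFun u ∧ IsSubSol H B (fun _ => a) u

/-- The set `H(0)` of critical subsolutions (the critical value being
assumed to be `0`). -/
def Crit {N m : ℕ} (H : Fin m → Euc N → Euc N → ℝ) (B : Euc N → Fin m → Fin m → ℝ) :
    Set (Fin m → Euc N → ℝ) :=
  {u | IsTorusFun u ∧ IsSubSol H B (fun _ => 0) u}

/-- The Mañé matrix `Φ_{i,j}(y,x) = sup_{v ∈ H(0)} (v_i(x) - v_j(y))`. -/
def Mane {N m : ℕ} (H : Fin m → Euc N → Euc N → ℝ) (B : Euc N → Fin m → Fin m → ℝ)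
    (i j : Fin m) (y x : Euc N) : ℝ :=
  sSup ((fun v : Fin m → Euc N → ℝ => v i x - v j y) '' Crit H B)

/-- The Aubry set: the set of points `y` such that the Mañé vector
`Φ_{·,i₀}(y,·)` is a critical (viscosity) solution on the whole torus; this is
independent of the index `i₀`. -/
def MAubry {N m : ℕ} (H : Fin m → Euc N → Euc N → ℝ) (B : Euc N → Fin m → Fin m → ℝ) :
    Set (Euc N) :=
  {y | ∀ i₀ : Fin m,
    IsSubSol H B (fun _ => 0) (fun l x => Mane H B l i₀ y x) ∧
    IsSuperSol H B (fun _ => 0) (fun l x => Mane H B l i₀ y x)}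

/-- The `i`-th component of a critical subsolution `v` is strict at `y`:
on some open neighbourhood `V` of `y` one has
`H_i(x,Dv_i(x)) + (B(x)v(x))_i ≤ -δ` for a.e. `x ∈ V`. -/
def StrictAt {N m : ℕ} (H : Fin m → Euc N → Euc N → ℝ) (B : Euc N → Fin m → Fin m → ℝ)
    (v : Fin m → Euc N → ℝ) (i : Fin m) (y : Euc N) : Prop :=
  ∃ V : Set (Euc N), IsOpen V ∧ y ∈ V ∧ ∃ δ : ℝ, 0 < δ ∧
    ∀ᵐ x ∂(volume : Measure (Euc N)), x ∈ V →
      DifferentiableAt ℝ (v i) x ∧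
      H i x (gradient (v i) x) + ∑ j, B x i j * v j x ≤ -δ

/-- `p` is a reachable gradient of `w` at `y`: a limit of gradients of `w`
along a sequence of differentiability points converging to `y`. -/
def ReachableGrad {N : ℕ} (w : Euc N → ℝ) (y : Euc N) (p : Euc N) : Prop :=
  ∃ z : ℕ → Euc N, (∀ n, DifferentiableAt ℝ w (z n)) ∧
    Tendsto z atTop (nhds y) ∧
    Tendsto (fun n => gradient w (z n)) atTop (nhds p)

/-!
Let `x₀` be a maximum point of `v i - u i`. Doubling the variables, one maximises
`v i x - u i y - k ‖x - y‖² - ‖x - x₀‖²`; testing the sub- and supersolution inequalities at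
the maximiser and letting `k → ∞` (coercivity of `H i` keeps the test gradients bounded, the
penalty `‖x - x₀‖²` forces the maximisers to `x₀`) gives `∑ j, B x₀ i j * (v j x₀ - u j x₀) ≤ 0`.
As the off-diagonal entries of `B x₀` are nonpositive and its rows sum to zero, every term
`B x₀ i j * (v j x₀ - u j x₀ - M)` of this sum is nonnegative, hence zero. So the set of indices
where the maximum `M` is attained at `x₀` has no coupling to its complement, and irreducibility
forces it to be everything.
-/

open Topology

theorem contDiff_norm_sub_sq {F : Type*} [NormedAddCommGroup F] [InnerProductSpace ℝ F]
    {n : WithTop ℕ∞} (b : F) : ContDiff ℝ n fun z => ‖z - b‖ ^ 2 :=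
  (contDiff_id.sub contDiff_const).norm_sq ℝ

section Gradient

variable {F : Type*} [NormedAddCommGroup F] [InnerProductSpace ℝ F] [CompleteSpace F]
  {f g : F → ℝ} {f' g' x : F}

theorem HasGradientAt.add (hf : HasGradientAt f f' x) (hg : HasGradientAt g g' x) :
    HasGradientAt (fun y => f y + g y) (f' + g') x := by
  rw [hasGradientAt_iff_hasFDerivAt, map_add]
  exact hf.hasFDerivAt.add hg.hasFDerivAt

theorem HasGradientAt.const_add (c : ℝ) (hf : HasGradientAt f f' x) :
    HasGradientAt (fun y => c + f y) f' x :=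
  hf.hasFDerivAt.const_add c

theorem HasGradientAt.const_sub (c : ℝ) (hf : HasGradientAt f f' x) :
    HasGradientAt (fun y => c - f y) (-f') x := by
  rw [hasGradientAt_iff_hasFDerivAt, map_neg]
  exact hf.hasFDerivAt.const_sub c

theorem HasGradientAt.const_mul (c : ℝ) (hf : HasGradientAt f f' x) :
    HasGradientAt (fun y => c * f y) (c • f') x := by
  rw [hasGradientAt_iff_hasFDerivAt, map_smulₛₗ, RCLike.conj_to_real]
  exact hf.hasFDerivAt.const_mul c

theorem hasGradientAt_norm_sub_sq (b x : F) :
    HasGradientAt (fun z => ‖z - b‖ ^ 2) ((2 : ℝ) • (x - b)) x := by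
  rw [hasGradientAt_iff_hasFDerivAt]
  refine ((hasFDerivAt_id x).sub_const b).norm_sq.congr_fderiv ?_
  ext z
  simp [two_mul]

end Gradient

theorem ZPeriodic.isCompact_range {N : ℕ} {α : Type*} [TopologicalSpace α] {f : Euc N → α}
    (hp : ZPeriodic f) (hc : Continuous f) : IsCompact (Set.range f) := by
  set K : Set (Euc N) := WithLp.toLp 2 '' Set.univ.pi fun _ => Set.Icc 0 1
  have hK : IsCompact K :=
    (isCompact_univ_pi fun _ => isCompact_Icc).image (PiLp.continuous_toLp 2 _)
  suffices Set.range f ⊆ f '' K from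
    (Set.image_subset_range f K).antisymm this ▸ hK.image hc
  rintro _ ⟨x, rfl⟩
  refine ⟨WithLp.toLp 2 fun i => Int.fract (x i),
    ⟨_, fun i _ => ⟨Int.fract_nonneg _, (Int.fract_lt_one _).le⟩, rfl⟩, ?_⟩
  have hfract : WithLp.toLp 2 (fun i => Int.fract (x i)) = x + intVec fun i => -⌊x i⌋ := by
    ext i
    simp [intVec, Int.fract, sub_eq_add_neg]
  rw [hfract, hp]

section Doubling

variable {F : Type*} [NormedAddCommGroup F]

def doubled (f g : F → ℝ) (k : ℝ) (x₀ x y : F) : ℝ :=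
  f x - g y - k * ‖x - y‖ ^ 2 - ‖x - x₀‖ ^ 2

variable {f g : F → ℝ} {k S M : ℝ} {x₀ x y : F}

theorem norm_sub_sq_le_of_le_doubled (hk : 0 ≤ k) (hS : f x - g y ≤ S)
    (hM : M ≤ doubled f g k x₀ x y) :
    ‖x - x₀‖ ^ 2 ≤ S - M ∧ k * ‖x - y‖ ^ 2 ≤ S - M := by
  unfold doubled at hM
  have := mul_nonneg hk (sq_nonneg ‖x - y‖)
  constructor <;> nlinarith [sq_nonneg ‖x - x₀‖]

theorem exists_forall_doubled_le [ProperSpace F] (hf : Continuous f) (hg : Continuous g)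
    (hS : ∀ x y, f x - g y ≤ S) (hk : 0 < k) (x₀ : F) :
    ∃ x y, ∀ x' y', doubled f g k x₀ x' y' ≤ doubled f g k x₀ x y := by
  set D := S - doubled f g k x₀ x₀ x₀
  set K := Metric.closedBall x₀ √D ×ˢ Metric.closedBall x₀ (√D + √(D / k))
  have hK : IsCompact K := (isCompact_closedBall _ _).prod (isCompact_closedBall _ _)
  have hsub : {p : F × F | doubled f g k x₀ x₀ x₀ ≤ doubled f g k x₀ p.1 p.2} ⊆ K := by
    rintro ⟨x, y⟩ hp
    obtain ⟨h₁, h₂⟩ := norm_sub_sq_le_of_le_doubled hk.le (hS x y) hp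
    have hx : ‖x - x₀‖ ≤ √D := Real.le_sqrt_of_sq_le h₁
    have hxy : ‖x - y‖ ≤ √(D / k) := Real.le_sqrt_of_sq_le ((le_div_iff₀' hk).2 h₂)
    refine ⟨mem_closedBall_iff_norm.2 hx, mem_closedBall_iff_norm.2 ?_⟩
    calc ‖y - x₀‖ ≤ ‖x - y‖ + ‖x - x₀‖ := by
          rw [← norm_neg (x - y), neg_sub]; exact norm_sub_le_norm_sub_add_norm_sub _ _ _
      _ ≤ √D + √(D / k) := by linarith
  have hΦ : Continuous fun p : F × F => doubled f g k x₀ p.1 p.2 := by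
    unfold doubled; fun_prop
  obtain ⟨⟨x, y⟩, hmax⟩ := hΦ.exists_forall_ge' (x₀, x₀) <| Filter.mem_cocompact.2
    ⟨K, hK, fun p hp => le_of_not_ge fun h => hp (hsub h)⟩
  exact ⟨x, y, fun x' y' => hmax (x', y')⟩

end Doubling

theorem exists_doubled_viscosity_ineq {N m : ℕ} {H : Fin m → Euc N → Euc N → ℝ}
    {B : Euc N → Fin m → Fin m → ℝ} {a : Fin m → ℝ} {v u : Fin m → Euc N → ℝ}
    (hsub : IsSubSol H B a v) (hsup : IsSuperSol H B a u) {i : Fin m}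
    (hvi : Continuous (v i)) (hui : Continuous (u i)) {S : ℝ} (hS : ∀ x y, v i x - u i y ≤ S)
    {M : ℝ} {x₀ : Euc N} (hatt : v i x₀ - u i x₀ = M) {k : ℝ} (hk : 0 < k) :
    ∃ x y, ‖x - x₀‖ ^ 2 ≤ S - M ∧ k * ‖x - y‖ ^ 2 ≤ S - M ∧
      M ≤ v i x - u i y - ‖x - x₀‖ ^ 2 ∧
      H i x ((2 * k) • (x - y) + (2 : ℝ) • (x - x₀)) + ∑ j, B x i j * v j x ≤ a i ∧
      a i ≤ H i y ((2 * k) • (x - y)) + ∑ j, B y i j * u j y := by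
  obtain ⟨x, y, hmax⟩ := exists_forall_doubled_le hvi hui hS hk x₀
  have hM : M ≤ doubled (v i) (u i) k x₀ x y := by simpa [doubled, hatt] using hmax x₀ x₀
  obtain ⟨hx, hxy⟩ := norm_sub_sq_le_of_le_doubled hk.le (hS x y) hM
  refine ⟨x, y, hx, hxy, ?_, ?_, ?_⟩
  · unfold doubled at hM
    nlinarith [mul_nonneg hk.le (sq_nonneg ‖x - y‖)]
  · set φ : Euc N → ℝ := fun z => u i y + k * ‖z - y‖ ^ 2 + ‖z - x₀‖ ^ 2
    have hφ : HasGradientAt φ ((2 * k) • (x - y) + (2 : ℝ) • (x - x₀)) x := by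
      rw [mul_comm, ← smul_smul]
      exact (((hasGradientAt_norm_sub_sq y x).const_mul k).const_add _).add
        (hasGradientAt_norm_sub_sq x₀ x)
    have hmaxφ : IsLocalMax (fun z => v i z - φ z) x := Filter.Eventually.of_forall fun z => by
      have := hmax z y
      simp only [doubled, φ] at this ⊢
      linarith
    simpa only [hφ.gradient] using hsub i x φ
      ((contDiff_const.add (contDiff_const.mul (contDiff_norm_sub_sq y))).add
        (contDiff_norm_sub_sq x₀)) hmaxφ
  · set ψ : Euc N → ℝ := fun z => v i x - ‖x - x₀‖ ^ 2 - k * ‖z - x‖ ^ 2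
    have hψ : HasGradientAt ψ ((2 * k) • (x - y)) y := by
      have := ((hasGradientAt_norm_sub_sq x y).const_mul k).const_sub (v i x - ‖x - x₀‖ ^ 2)
      rwa [smul_smul, ← smul_neg, neg_sub, mul_comm] at this
    have hminψ : IsLocalMin (fun z => u i z - ψ z) y := Filter.Eventually.of_forall fun z => by
      have := hmax x z
      simp only [doubled, ψ, norm_sub_rev x] at this ⊢
      linarith
    simpa only [hψ.gradient] using hsup i y ψ
      (contDiff_const.sub (contDiff_const.mul (contDiff_norm_sub_sq x))) hminψ

theorem tendsto_zero_of_succ_mul_norm_sq_le {E : Type*} [SeminormedAddCommGroup E] {z : ℕ → E}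
    {D : ℝ} (h : ∀ n : ℕ, (n + 1 : ℝ) * ‖z n‖ ^ 2 ≤ D) : Tendsto z atTop (𝓝 0) := by
  have hsq : Tendsto (fun n => ‖z n‖ ^ 2) atTop (𝓝 0) := by
    refine squeeze_zero (fun n => sq_nonneg _) (fun n => ?_)
      (by simpa using tendsto_one_div_add_atTop_nhds_zero_nat.const_mul D)
    rw [← div_eq_mul_inv, le_div_iff₀ (by positivity), mul_comm]
    exact h n
  rw [tendsto_zero_iff_norm_tendsto_zero]
  have := (Real.continuous_sqrt.tendsto 0).comp hsq
  simpa only [Function.comp_def, Real.sqrt_sq (norm_nonneg _), Real.sqrt_zero] using this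

theorem le_of_tendsto_of_add_le_of_le_add {ι X P : Type*} [TopologicalSpace X] [TopologicalSpace P]
    {l : Filter ι} [l.NeBot] {G : X → P → ℝ} (hG : Continuous fun q : X × P => G q.1 q.2)
    {f g : X → ℝ} (hf : Continuous f) (hg : Continuous g) {c : ℝ} {x y : ι → X} {p q : ι → P}
    {x₀ : X} {p₀ : P} (hx : Tendsto x l (𝓝 x₀)) (hy : Tendsto y l (𝓝 x₀))
    (hp : Tendsto p l (𝓝 p₀)) (hq : Tendsto q l (𝓝 p₀))
    (hsub : ∀ n, G (x n) (p n) + f (x n) ≤ c) (hsup : ∀ n, c ≤ G (y n) (q n) + g (y n)) :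
    f x₀ ≤ g x₀ := by
  have := le_of_tendsto_of_tendsto'
    (((hG.tendsto _).comp (hx.prodMk_nhds hp)).add ((hf.tendsto _).comp hx))
    (((hG.tendsto _).comp (hy.prodMk_nhds hq)).add ((hg.tendsto _).comp hy))
    fun n => (hsub n).trans (hsup n)
  simpa using this

theorem sum_coupling_mul_sub_nonpos_of_isMaxOn {N m : ℕ} {H : Fin m → Euc N → Euc N → ℝ}
    {B : Euc N → Fin m → Fin m → ℝ} {a : Fin m → ℝ} {v u : Fin m → Euc N → ℝ}
    (hsub : IsSubSol H B a v) (hsup : IsSuperSol H B a u) {i : Fin m}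
    (hH : Continuous fun q : Euc N × Euc N => H i q.1 q.2) {α : ℝ → ℝ}
    (hα : Tendsto α atTop atTop) (hHα : ∀ x p, α ‖p‖ ≤ H i x p)
    (hB : ∀ j, Continuous fun x => B x i j) (hv : ∀ j, Continuous (v j))
    (hu : ∀ j, Continuous (u j)) (hv_bdd : BddAbove (Set.range (v i)))
    (hu_bdd : BddBelow (Set.range (u i))) {x₀ : Euc N}
    (hmax : IsMaxOn (fun x => v i x - u i x) Set.univ x₀) :
    ∑ j, B x₀ i j * (v j x₀ - u j x₀) ≤ 0 := by
  obtain ⟨Sv, hSv⟩ := hv_bdd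
  obtain ⟨Su, hSu⟩ := hu_bdd
  obtain ⟨M, hM₀⟩ : ∃ M, v i x₀ - u i x₀ = M := ⟨_, rfl⟩
  obtain ⟨D, hD⟩ : ∃ D, Sv - Su - M = D := ⟨_, rfl⟩
  choose x y hx hxy hM hsubn hsupn using fun n : ℕ =>
    hD ▸ exists_doubled_viscosity_ineq hsub hsup (hv i) (hu i)
      (fun x y => sub_le_sub (hSv ⟨x, rfl⟩) (hSu ⟨y, rfl⟩)) hM₀ (k := n + 1) (by positivity)
  set q : ℕ → Euc N := fun n => (2 * (n + 1 : ℝ)) • (x n - y n)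
  set p : ℕ → Euc N := fun n => q n + (2 : ℝ) • (x n - x₀)
  have hx_mem : ∀ n, x n ∈ Metric.closedBall x₀ √D := fun n =>
    mem_closedBall_iff_norm.2 (Real.le_sqrt_of_sq_le (hx n))
  -- coercivity of `H i` bounds the test gradients `p n`
  obtain ⟨C, hC⟩ := (isCompact_closedBall x₀ √D).bddAbove_image
    (f := fun z => a i - ∑ j, B z i j * v j z) (by fun_prop)
  obtain ⟨R, hR⟩ := eventually_atTop.1 (hα.eventually_gt_atTop C)
  have hp_mem : ∀ n, p n ∈ Metric.closedBall 0 R := fun n =>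
    mem_closedBall_zero_iff.2 <| le_of_not_gt fun h => (hR _ h.le).not_ge <|
      (hHα _ _).trans (by linarith [hsubn n, hC ⟨x n, hx_mem n, rfl⟩])
  obtain ⟨⟨x', p'⟩, -, φ, hφ, hlim⟩ :=
    ((isCompact_closedBall x₀ √D).prod (isCompact_closedBall 0 R)).tendsto_subseq
      (x := fun n => (x n, p n)) fun n => ⟨hx_mem n, hp_mem n⟩
  have hxφ : Tendsto (x ∘ φ) atTop (𝓝 x') := (continuous_fst.tendsto _).comp hlim
  have hpφ : Tendsto (p ∘ φ) atTop (𝓝 p') := (continuous_snd.tendsto _).comp hlim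
  have hyφ : Tendsto (y ∘ φ) atTop (𝓝 x') := by
    have h0 := (tendsto_zero_of_succ_mul_norm_sq_le hxy).comp hφ.tendsto_atTop
    rw [← sub_zero x']
    exact (hxφ.sub h0).congr fun n => sub_sub_cancel _ _
  obtain rfl : x₀ = x' := by
    have hlimM : M ≤ v i x' - u i x' - ‖x' - x₀‖ ^ 2 := ge_of_tendsto'
      ((((hv i).tendsto _).comp hxφ).sub (((hu i).tendsto _).comp hyφ) |>.sub
        (((continuous_id.sub continuous_const).norm.pow 2).tendsto _ |>.comp hxφ))
      fun n => hM (φ n)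
    have := isMaxOn_iff.1 hmax x' trivial
    rw [eq_comm, ← sub_eq_zero, ← norm_eq_zero, ← sq_eq_zero_iff]
    exact le_antisymm (by linarith) (sq_nonneg _)
  have hqφ : Tendsto (q ∘ φ) atTop (𝓝 p') := by
    simpa [p, Function.comp_def] using hpφ.sub ((hxφ.sub_const x₀).const_smul (2 : ℝ))
  have := le_of_tendsto_of_add_le_of_le_add hH (f := fun z => ∑ j, B z i j * v j z)
    (g := fun z => ∑ j, B z i j * u j z) (by fun_prop) (by fun_prop) hxφ hyφ hpφ hqφ
    (fun n => hsubn (φ n)) (fun n => hsupn (φ n))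
  simpa [mul_sub, Finset.sum_sub_distrib] using this

theorem eq_of_sum_mul_nonpos_of_le {ι : Type*} [Fintype ι] {r w : ι → ℝ} {i : ι} {M : ℝ}
    (hr_off : ∀ j ≠ i, r j ≤ 0) (hr : ∑ j, r j = 0) (hw : ∀ j, w j ≤ M) (hi : w i = M)
    (hsum : ∑ j, r j * w j ≤ 0) {j : ι} (hj : r j ≠ 0) : w j = M := by
  have hterm : ∀ l ∈ Finset.univ, 0 ≤ r l * (w l - M) := fun l _ => by
    rcases eq_or_ne l i with rfl | hl
    · simp [hi]
    · exact mul_nonneg_of_nonpos_of_nonpos (hr_off l hl) (sub_nonpos.2 (hw l))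
  have htotal : ∑ l, r l * (w l - M) = ∑ l, r l * w l := by
    simp [mul_sub, Finset.sum_sub_distrib, ← Finset.sum_mul, hr]
  have := (Finset.sum_eq_zero_iff_of_nonneg hterm).1
    (le_antisymm (htotal ▸ hsum) (Finset.sum_nonneg hterm)) j (Finset.mem_univ j)
  linarith [(mul_eq_zero.1 this).resolve_left hj]

theorem IsIrreducibleMat.forall_eq_of_sum_mul_nonpos {m : ℕ} {b : Fin m → Fin m → ℝ}
    (hirr : IsIrreducibleMat b) (hoff : ∀ i j, j ≠ i → b i j ≤ 0) (hdeg : IsDegenerateMat b)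
    {w : Fin m → ℝ} {M : ℝ} (hw : ∀ j, w j ≤ M) (hsum : ∀ i, w i = M → ∑ j, b i j * w j ≤ 0)
    {i₀ : Fin m} (hi₀ : w i₀ = M) : ∀ j, w j = M := by
  classical
  by_contra! ⟨j₀, hj₀⟩
  obtain ⟨i, hi, j, hj, hb⟩ := hirr (Finset.univ.filter fun l => w l = M)
    ⟨i₀, by simpa using hi₀⟩ fun h => hj₀ (by simpa using Finset.ext_iff.1 h j₀)
  simp only [Finset.mem_filter, Finset.mem_univ, true_and] at hi hj
  exact hj (eq_of_sum_mul_nonpos_of_le (hoff i) (hdeg i) hw hi (hsum i hi) hb)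

theorem stmt4_general {N m : ℕ}
    (H : Fin m → Euc N → Euc N → ℝ) (hH : ∀ i, IsConvexHamiltonian (H i))
    (B : Euc N → Fin m → Fin m → ℝ) (hB : IsCouplingField B) (a : Fin m → ℝ)
    (v u : Fin m → Euc N → ℝ) (hv : IsTorusFun v) (hu : IsTorusFun u)
    (hsub : IsSubSol H B a v) (hsup : IsSuperSol H B a u)
    (M : ℝ) (hub : ∀ (i : Fin m) (x : Euc N), v i x - u i x ≤ M)
    (x₀ : Euc N) (i₀ : Fin m) (hatt : v i₀ x₀ - u i₀ x₀ = M) :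
    ∀ j : Fin m, v j x₀ - u j x₀ = M := by
  obtain ⟨hBc, -, hBmat⟩ := hB
  obtain ⟨hcoupling, hdeg, hirr⟩ := hBmat x₀
  refine hirr.forall_eq_of_sum_mul_nonpos hcoupling.1 hdeg (hub · x₀) (fun i hi => ?_) hatt
  obtain ⟨hHc, -, -, α, _, hα, -, hαH⟩ := hH i
  exact sum_coupling_mul_sub_nonpos_of_isMaxOn hsub hsup hHc hα (fun x p => (hαH x p).1)
    (hBc i) hv.1 hu.1 ((hv.2 i).isCompact_range (hv.1 i)).bddAbove
    ((hu.2 i).isCompact_range (hu.1 i)).bddBelow fun x _ => (hub i x).trans hi.ge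

/-- at a point where the max of `v_i - u_i` is attained for some
index, it is attained for all indices. -/
theorem stmt4 {N m : ℕ} (hN : 0 < N) (hm : 0 < m)
    (H : Fin m → Euc N → Euc N → ℝ) (hH : ∀ i, IsConvexHamiltonian (H i))
    (B : Euc N → Fin m → Fin m → ℝ) (hB : IsCouplingField B) (a : Fin m → ℝ)
    (v u : Fin m → Euc N → ℝ) (hv : IsTorusFun v) (hu : IsTorusFun u)
    (hsub : IsSubSol H B a v) (hsup : IsSuperSol H B a u)
    (M : ℝ) (hub : ∀ (i : Fin m) (x : Euc N), v i x - u i x ≤ M)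
    (x₀ : Euc N) (i₀ : Fin m) (hatt : v i₀ x₀ - u i₀ x₀ = M) :
    ∀ j : Fin m, v j x₀ - u j x₀ = M :=
  stmt4_general H hH B hB a v u hv hu hsub hsup M hub x₀ i₀ hatt

end
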